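/- arXiv:1904.05000 — 3 statements merged into one kernel-verified Lean document; each statement's English description precedes it below -/
import Mathlib

section
/- The iterated residue Res_{x_1=0} Res_{x_2=0} of e^{a_1 x_1 + a_2 x_2} / (x_1 x_2 (x_1 − x_2)^n) equals a_1^n / n!, for any positive integer n and real numbers a_1, a_2. -/
open Complex

/-- The residue at `0` of a function `f : ℂ → ℂ`, computed as a contour integral over the
circle of radius `r` centered at `0`. -/
noncomputable def res (f : ℂ → ℂ) (r : ℝ) : ℂ :=
    (2 * Real.pi * Complex.I)⁻¹ * ∮ z in C(0, r), f z

/-! The inner residue is a simple pole at `x₂ = 0`, since `x₂ = x₁` lies outside the inner circle;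
it leaves `e^{a₁x₁} / x₁^{n+1}`, whose residue is the `n`-th Taylor coefficient of `e^{a₁x₁}`. -/

open Metric

lemma res_congr {f g : ℂ → ℂ} {r : ℝ} (hr : 0 ≤ r) (h : Set.EqOn f g (sphere 0 r)) :
    res f r = res g r := by
  rw [res, res, circleIntegral.integral_congr hr h]

lemma res_div_pow_succ {f : ℂ → ℂ} {r : ℝ} (hr : 0 < r) (n : ℕ)
    (hf : DifferentiableOn ℂ f (closedBall 0 r)) :
    res (fun z => f z / z ^ (n + 1)) r = iteratedDeriv n f 0 / n.factorial := by
  have hcauchy := hf.circleIntegral_one_div_sub_center_pow_smul hr n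
  simp only [sub_zero, smul_eq_mul, one_div_mul_eq_div] at hcauchy
  rw [res, hcauchy, ← mul_assoc, ← mul_div_assoc, inv_mul_cancel₀ two_pi_I_ne_zero]
  ring

lemma res_div_mul_mul_sub_pow {f : ℂ → ℂ} {r : ℝ} {x : ℂ} (hr : 0 < r) (hx : r < ‖x‖)
    (n : ℕ) (hf : DifferentiableOn ℂ f (closedBall 0 r)) :
    res (fun z => f z / (x * z * (x - z) ^ n)) r = f 0 / x ^ (n + 1) := by
  have hx0 : x ≠ 0 := norm_pos_iff.mp (hr.trans hx)
  have hsub : ∀ z ∈ closedBall (0 : ℂ) r, x - z ≠ 0 := by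
    intro z hz
    rw [sub_ne_zero]
    rintro rfl
    exact (mem_closedBall_zero_iff.mp hz).not_gt hx
  have hg : DifferentiableOn ℂ (fun z => f z / (x * (x - z) ^ n)) (closedBall 0 r) :=
    hf.div (by fun_prop) fun z hz => mul_ne_zero hx0 (pow_ne_zero n (hsub z hz))
  have hsimple := res_div_pow_succ hr 0 hg
  simp only [zero_add, pow_one, iteratedDeriv_zero, sub_zero, Nat.factorial_zero,
    Nat.cast_one, div_one] at hsimple
  convert hsimple using 2
  · funext z
    ring
  · ring

lemma res_cexp_const_mul_div_pow_succ {r : ℝ} (hr : 0 < r) (n : ℕ) (c : ℂ) :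
    res (fun z => exp (c * z) / z ^ (n + 1)) r = c ^ n / n.factorial := by
  rw [res_div_pow_succ hr n (by fun_prop), iteratedDeriv_cexp_const_mul]
  simp

theorem iterated_residue_A2_general (n : ℕ) (a1 a2 : ℝ) :
    res (fun x1 => res (fun x2 =>
        Complex.exp (a1 * x1 + a2 * x2) / (x1 * x2 * (x1 - x2) ^ n)) 1) 2
      = (a1 : ℂ) ^ n / n.factorial := by
  have hinner : Set.EqOn
      (fun x1 => res (fun x2 => exp (a1 * x1 + a2 * x2) / (x1 * x2 * (x1 - x2) ^ n)) 1)
      (fun x1 => exp (a1 * x1) / x1 ^ (n + 1)) (sphere 0 2) := by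
    intro x1 hx1
    have hx1 : (1 : ℝ) < ‖x1‖ := by rw [mem_sphere_zero_iff_norm.mp hx1]; norm_num
    simpa using res_div_mul_mul_sub_pow one_pos hx1 n
      (f := fun x2 => exp (a1 * x1 + a2 * x2)) (by fun_prop)
  rw [res_congr zero_le_two hinner, res_cexp_const_mul_div_pow_succ two_pos]

/-- `Res_{x₁=0} Res_{x₂=0} e^{a₁x₁+a₂x₂}/(x₁ x₂ (x₁-x₂)^n) = a₁^n/n!`
(inner residue in `x₂` on a small circle, outer residue in `x₁` on a larger circle). -/
theorem iterated_residue_A2 (n : ℕ) (hn : 0 < n) (a1 a2 : ℝ) :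
    res (fun x1 => res (fun x2 =>
        Complex.exp (a1 * x1 + a2 * x2) / (x1 * x2 * (x1 - x2) ^ n)) 1) 2
      = (a1 : ℂ) ^ n / n.factorial :=
  iterated_residue_A2_general n a1 a2
end

section
/- Let φ(a_1, a_2) be a homogeneous polynomial of degree d in two variables satisfying ∂_2^{m_{2,3}} φ = 0 and (∂_1 − ∂_2)^{m_{1,2}} ∂_1^{m_{1,3}} φ = 0, where m_{1,2}, m_{1,3}, m_{2,3} are positive integers with total M = m_{1,2} + m_{1,3} + m_{2,3}. If d > M − 2, then φ = 0. -/
open MvPolynomial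

namespace RankTwoAux

noncomputable abbrev Dx : MvPolynomial (Fin 2) ℝ → MvPolynomial (Fin 2) ℝ :=
  fun p => pderiv 0 p

lemma coeff_pderiv (i : Fin 2) (p : MvPolynomial (Fin 2) ℝ) (m : Fin 2 →₀ ℕ) :
    coeff m (pderiv i p) = ((m i : ℝ) + 1) * coeff (m + Finsupp.single i 1) p := by
  induction p using MvPolynomial.induction_on' with
  | add p q hp hq => simp [hp, hq, mul_add]
  | monomial s a =>
    rw [pderiv_monomial, coeff_monomial, coeff_monomial]
    by_cases h : s = m + Finsupp.single i 1
    · subst h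
      rw [if_pos (add_tsub_cancel_right _ _), if_pos rfl]
      simp [mul_comm]
    · rw [if_neg h]
      by_cases h2 : s - Finsupp.single i 1 = m
      · rw [if_pos h2]
        rcases Nat.eq_zero_or_pos (s i) with hs | hs
        · simp [hs]
        · exfalso
          apply h
          rw [← h2, tsub_add_cancel_of_le]
          exact Finsupp.single_le_iff.mpr hs
      · rw [if_neg h2, mul_zero]

lemma zero_of_iterate (v : Fin 2) :
    ∀ (n : ℕ) (p : MvPolynomial (Fin 2) ℝ),
      (fun q : MvPolynomial (Fin 2) ℝ => pderiv v q)^[n] p = 0 →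
      ∀ m : Fin 2 →₀ ℕ, n ≤ m v → coeff m p = 0 := by
  intro n
  induction n with
  | zero => intro p hp m _; simp at hp; simp [hp]
  | succ n ih =>
    intro p hp m hm
    rw [Function.iterate_succ_apply] at hp
    have h1 : 1 ≤ m v := le_trans (Nat.le_add_left 1 n) hm
    have key := ih (pderiv v p) hp (m - Finsupp.single v 1) ?_
    · rw [coeff_pderiv, tsub_add_cancel_of_le (Finsupp.single_le_iff.mpr h1)] at key
      have hne : ∀ k : ℕ, (k : ℝ) + 1 ≠ 0 := fun k => Nat.cast_add_one_ne_zero k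
      exact (mul_eq_zero.mp key).resolve_left (hne _)
    · simp only [Finsupp.tsub_apply, Finsupp.single_eq_same]
      omega

lemma pderiv_comm' (i j : Fin 2) (p : MvPolynomial (Fin 2) ℝ) :
    pderiv i (pderiv j p) = pderiv j (pderiv i p) := by
  ext m
  rw [coeff_pderiv, coeff_pderiv, coeff_pderiv, coeff_pderiv,
    add_right_comm m (Finsupp.single i 1) (Finsupp.single j 1)]
  rcases eq_or_ne i j with rfl | h
  · ring
  · simp only [Finsupp.add_apply, Finsupp.single_apply, if_neg h, if_neg h.symm, add_zero]
    ring

noncomputable def sig : MvPolynomial (Fin 2) ℝ →ₐ[ℝ] MvPolynomial (Fin 2) ℝ :=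
  aeval ![X 0, X 1 - X 0]

noncomputable def tau : MvPolynomial (Fin 2) ℝ →ₐ[ℝ] MvPolynomial (Fin 2) ℝ :=
  aeval ![X 0, X 0 + X 1]

lemma sig_X0 : sig (X 0) = X 0 := by simp [sig]
lemma sig_X1 : sig (X 1) = X 1 - X 0 := by simp [sig]
lemma tau_X0 : tau (X 0) = X 0 := by simp [tau]
lemma tau_X1 : tau (X 1) = X 0 + X 1 := by simp [tau]
lemma pd10 : pderiv (1 : Fin 2) (X 0 : MvPolynomial (Fin 2) ℝ) = 0 :=
  pderiv_X_of_ne (by decide)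
lemma pd01 : pderiv (0 : Fin 2) (X 1 : MvPolynomial (Fin 2) ℝ) = 0 :=
  pderiv_X_of_ne (by decide)

lemma sig_pderiv_one (p : MvPolynomial (Fin 2) ℝ) :
    pderiv 1 (sig p) = sig (pderiv 1 p) := by
  induction p using MvPolynomial.induction_on with
  | C a => simp [sig]
  | add p q hp hq => simp [map_add, hp, hq]
  | mul_X p i hp =>
    fin_cases i <;>
      simp only [Fin.zero_eta, Fin.mk_one, map_mul, map_add, map_sub, pderiv_mul, hp, sig_X0,
        sig_X1, pderiv_X_self, pd10, pd01, map_zero, map_one] <;> ring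

lemma sig_pderiv_zero (p : MvPolynomial (Fin 2) ℝ) :
    pderiv 0 (sig p) = sig (pderiv 0 p - pderiv 1 p) := by
  induction p using MvPolynomial.induction_on with
  | C a => simp [sig]
  | add p q hp hq =>
    simp only [map_add, hp, hq, map_sub]
    abel
  | mul_X p i hp =>
    fin_cases i <;>
      simp only [Fin.zero_eta, Fin.mk_one, map_mul, map_add, map_sub, pderiv_mul, hp, sig_X0,
        sig_X1, pderiv_X_self, pd10, pd01, map_zero, map_one] <;> ring

lemma tau_sig (p : MvPolynomial (Fin 2) ℝ) : tau (sig p) = p := by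
  induction p using MvPolynomial.induction_on with
  | C a => simp [sig, tau]
  | add p q hp hq => simp [map_add, hp, hq]
  | mul_X p i hp =>
    fin_cases i <;>
      simp only [Fin.zero_eta, Fin.mk_one, map_mul, map_add, map_sub, hp, sig_X0, sig_X1,
        tau_X0, tau_X1] <;> ring

lemma sig_iter_one (k : ℕ) (p : MvPolynomial (Fin 2) ℝ) :
    (fun q : MvPolynomial (Fin 2) ℝ => pderiv 1 q)^[k] (sig p) =
      sig ((fun q : MvPolynomial (Fin 2) ℝ => pderiv 1 q)^[k] p) := by
  induction k with
  | zero => rfl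
  | succ k ih =>
    rw [Function.iterate_succ_apply', Function.iterate_succ_apply', ih, sig_pderiv_one]

lemma sig_iter_D (k : ℕ) (p : MvPolynomial (Fin 2) ℝ) :
    (fun q : MvPolynomial (Fin 2) ℝ => pderiv 0 q)^[k] (sig p) =
      sig ((fun q : MvPolynomial (Fin 2) ℝ => pderiv 0 q - pderiv 1 q)^[k] p) := by
  induction k with
  | zero => rfl
  | succ k ih =>
    rw [Function.iterate_succ_apply', Function.iterate_succ_apply', ih, sig_pderiv_zero]

lemma degree_fin_two (m : Fin 2 →₀ ℕ) : m.degree = m 0 + m 1 := by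
  rw [Finsupp.degree_apply, Finset.sum_subset (Finset.subset_univ m.support)
    (fun i _ hi => Finsupp.notMem_support_iff.mp hi), Fin.sum_univ_two]

lemma isHomogeneous_pderiv {p : MvPolynomial (Fin 2) ℝ} {n : ℕ} (i : Fin 2)
    (hp : p.IsHomogeneous n) : (pderiv i p).IsHomogeneous (n - 1) := by
  intro m hm
  rw [coeff_pderiv] at hm
  have h2 : coeff (m + Finsupp.single i 1) p ≠ 0 := by
    intro h; rw [h, mul_zero] at hm; exact hm rfl
  have h3 := hp h2
  rw [show Finsupp.weight (1 : Fin 2 → ℕ) = Finsupp.degree from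
    Finsupp.degree_eq_weight_one.symm] at h3 ⊢
  have hdeg : (m + Finsupp.single i 1).degree = m.degree + 1 := by
    rw [degree_fin_two, degree_fin_two]
    simp only [Finsupp.add_apply, Finsupp.single_apply]
    fin_cases i <;> simp <;> omega
  omega

lemma isHomogeneous_pderiv_iter {n : ℕ} (i : Fin 2) :
    ∀ (k : ℕ) (p : MvPolynomial (Fin 2) ℝ), p.IsHomogeneous n →
      ((fun q : MvPolynomial (Fin 2) ℝ => pderiv i q)^[k] p).IsHomogeneous (n - k) := by
  intro k
  induction k with
  | zero => intro p hp; simpa using hp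
  | succ k ih =>
    intro p hp
    rw [Function.iterate_succ_apply']
    have h2 := isHomogeneous_pderiv i (ih p hp)
    have h3 : n - k - 1 = n - (k + 1) := by omega
    rwa [h3] at h2

end RankTwoAux

open RankTwoAux
/-- Rank-2 case of Theorem 3.4(1): a homogeneous polynomial `φ(a₁,a₂)` of degree
`d > M - 2` (with `M = m₁₂ + m₁₃ + m₂₃`) satisfying `∂₂^{m₂₃} φ = 0` and
`(∂₁ - ∂₂)^{m₁₂} ∂₁^{m₁₃} φ = 0` vanishes identically. -/
theorem rank_two_vanishing (m12 m13 m23 d : ℕ)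
    (h12 : 0 < m12) (h13 : 0 < m13) (h23 : 0 < m23)
    (hd : m12 + m13 + m23 - 2 < d)
    (φ : MvPolynomial (Fin 2) ℝ) (hφ : φ.IsHomogeneous d)
    (h1 : (fun p : MvPolynomial (Fin 2) ℝ => pderiv 1 p)^[m23] φ = 0)
    (h2 : (fun p : MvPolynomial (Fin 2) ℝ => pderiv 0 p - pderiv 1 p)^[m12]
        ((fun p : MvPolynomial (Fin 2) ℝ => pderiv 0 p)^[m13] φ) = 0) :
    φ = 0 := by
  set ψ : MvPolynomial (Fin 2) ℝ := (fun p : MvPolynomial (Fin 2) ℝ => pderiv 0 p)^[m13] φ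
    with hψdef
  -- ψ is homogeneous of degree d - m13
  have hψhom : ψ.IsHomogeneous (d - m13) := isHomogeneous_pderiv_iter 0 m13 φ hφ
  -- ∂₁^[m23] ψ = 0 (derivatives commute)
  have hcomm : Function.Commute (fun p : MvPolynomial (Fin 2) ℝ => pderiv 0 p)
      (fun p : MvPolynomial (Fin 2) ℝ => pderiv 1 p) := fun p => pderiv_comm' 0 1 p
  have hψ1 : (fun p : MvPolynomial (Fin 2) ℝ => pderiv 1 p)^[m23] ψ = 0 := by
    rw [hψdef, ← ((hcomm.iterate_left m13).iterate_right m23) φ, h1]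
    exact Function.iterate_fixed (by simp) m13
  -- consider χ = sig ψ
  set χ : MvPolynomial (Fin 2) ℝ := sig ψ with hχdef
  have hχ0 : (fun q : MvPolynomial (Fin 2) ℝ => pderiv 0 q)^[m12] χ = 0 := by
    rw [hχdef, sig_iter_D, h2, map_zero]
  have hχ1 : (fun q : MvPolynomial (Fin 2) ℝ => pderiv 1 q)^[m23] χ = 0 := by
    rw [hχdef, sig_iter_one, hψ1, map_zero]
  have hχhom : χ.IsHomogeneous (d - m13) := by
    have hg : ∀ i : Fin 2, (![X 0, X 1 - X 0] i : MvPolynomial (Fin 2) ℝ).IsHomogeneous 1 := by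
      intro i
      fin_cases i
      · simpa using isHomogeneous_X ℝ (0 : Fin 2)
      · simpa using ((isHomogeneous_X ℝ (1 : Fin 2)).sub (isHomogeneous_X ℝ (0 : Fin 2)))
    have := hψhom.aeval (S := ℝ) ![X 0, X 1 - X 0] hg
    rw [one_mul] at this
    exact this
  -- χ = 0
  have hχ : χ = 0 := by
    ext m
    rw [coeff_zero]
    by_cases hm0 : m12 ≤ m 0
    · exact zero_of_iterate 0 m12 χ hχ0 m hm0
    by_cases hm1 : m23 ≤ m 1
    · exact zero_of_iterate 1 m23 χ hχ1 m hm1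
    · apply hχhom.coeff_eq_zero
      rw [degree_fin_two]
      omega
  have hψ0 : ψ = 0 := by
    have := tau_sig ψ
    rw [← hχdef] at this
    rw [← this, hχ, map_zero]
  -- now conclude φ = 0
  ext m
  rw [coeff_zero]
  by_cases hdeg : m.degree = d
  · rw [degree_fin_two] at hdeg
    by_cases hm0 : m13 ≤ m 0
    · exact zero_of_iterate 0 m13 φ hψ0 m hm0
    · exact zero_of_iterate 1 m23 φ h1 m (by omega)
  · exact hφ.coeff_eq_zero hdeg
end

section
/- Let p and q be positive integers and let φ(a_1, a_2) be a homogeneous polynomial of degree p + q − 2 satisfying ∂_2^q φ = 0 and (∂_1 − ∂_2)^p φ = 0. Then φ is determined up to scalar by its top coefficient in a_2; i.e. the solution space has dimension at most 1. -/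
open MvPolynomial

/-- coefficient of a partial derivative -/
lemma coeff_pderiv_aux (i : Fin 2) (m : Fin 2 →₀ ℕ) (P : MvPolynomial (Fin 2) ℝ) :
    coeff m (pderiv i P) = ((m i : ℝ) + 1) * coeff (m + Finsupp.single i 1) P := by
  induction P using MvPolynomial.induction_on' with
  | monomial s a =>
    rw [pderiv_monomial, coeff_monomial, coeff_monomial]
    by_cases h : m + Finsupp.single i 1 = s
    · have hsi : s i = m i + 1 := by
        rw [← h]; simp
      have hm : s - Finsupp.single i 1 = m := by
        rw [← h]; ext j; by_cases hj : j = i <;> simp [hj]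
      rw [if_pos hm, if_pos h.symm, hsi]
      push_cast; ring
    · rw [if_neg (show ¬s = m + Finsupp.single i 1 from fun hh => h hh.symm), mul_zero]
      by_cases h2 : s - Finsupp.single i 1 = m
      · rw [if_pos h2]
        by_cases h3 : s i = 0
        · simp [h3]
        · exfalso; apply h
          ext j; by_cases hj : j = i
          · subst hj; simp [← h2, Nat.sub_add_cancel (Nat.one_le_iff_ne_zero.2 h3)]
          · simp [hj, ← h2, Finsupp.single_eq_of_ne' (fun hh => hj hh.symm)]
      · rw [if_neg h2]
  | add f g hf hg =>
    simp [hf, hg, coeff_add, mul_add]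

/-- vanishing of coefficients from iterated derivative vanishing -/
lemma vanish_aux (i : Fin 2) (n : ℕ) (P : MvPolynomial (Fin 2) ℝ)
    (h : (fun χ : MvPolynomial (Fin 2) ℝ => pderiv i χ)^[n] P = 0) :
    ∀ m : Fin 2 →₀ ℕ, n ≤ m i → coeff m P = 0 := by
  induction n generalizing P with
  | zero => intro m _; simp at h; simp [h]
  | succ n ih =>
    intro m hm
    rw [Function.iterate_succ_apply] at h
    have e2 : (m - Finsupp.single i 1 : Fin 2 →₀ ℕ) i = m i - 1 := by simp
    have h1 := ih (pderiv i P) h (m - Finsupp.single i 1) (by omega)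
    rw [coeff_pderiv_aux] at h1
    have hmi : 1 ≤ m i := by omega
    have e1 : (m - Finsupp.single i 1) + Finsupp.single i 1 = m := by
      ext j; by_cases hj : j = i
      · subst hj; simp; omega
      · simp [hj, Finsupp.single_eq_of_ne (fun hh => hj hh.symm)]
    have e2 : (m - Finsupp.single i 1 : Fin 2 →₀ ℕ) i = m i - 1 := by simp
    rw [e1, e2] at h1
    have : ((m i - 1 : ℕ) : ℝ) + 1 ≠ 0 := by positivity
    exact (mul_eq_zero.1 h1).resolve_left this

lemma degree_fin2 (m : Fin 2 →₀ ℕ) : m.degree = m 0 + m 1 := by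
  rw [Finsupp.degree_apply]
  rw [Finset.sum_subset (Finset.subset_univ m.support)
    (by intro x _ hx; simpa using (Finsupp.notMem_support_iff.1 hx))]
  simp [Fin.sum_univ_two]

/-- key lemma: homogeneous of degree p+q-2 with ∂₀^p = 0 and ∂₁^q = 0 is a scalar
multiple of X₀^(p-1) X₁^(q-1). -/
lemma key_aux (p q : ℕ) (hp : 0 < p) (hq : 0 < q) (P : MvPolynomial (Fin 2) ℝ)
    (hh : P.IsHomogeneous (p + q - 2))
    (h0 : (fun χ : MvPolynomial (Fin 2) ℝ => pderiv 0 χ)^[p] P = 0)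
    (h1 : (fun χ : MvPolynomial (Fin 2) ℝ => pderiv 1 χ)^[q] P = 0) :
    ∃ c : ℝ, P = c • monomial (Finsupp.single 0 (p-1) + Finsupp.single 1 (q-1)) (1 : ℝ) := by
  set u : Fin 2 →₀ ℕ := Finsupp.single 0 (p-1) + Finsupp.single 1 (q-1) with hu
  refine ⟨coeff u P, ?_⟩
  ext m
  rw [coeff_smul, coeff_monomial]
  by_cases hm : m = u
  · subst hm; simp
  · rw [if_neg (fun hh => hm hh.symm)]
    simp only [smul_eq_mul, mul_zero]
    by_cases hd : m.degree = p + q - 2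
    · -- degree matches; then m 0 ≥ p or m 1 ≥ q
      rw [degree_fin2] at hd
      by_cases c0 : m 0 ≤ p - 1
      · by_cases c1 : m 1 ≤ q - 1
        · exfalso; apply hm
          have e0 : m 0 = p - 1 := by omega
          have e1 : m 1 = q - 1 := by omega
          ext j; fin_cases j <;> simp [hu, e0, e1]
        · exact vanish_aux 1 q P h1 m (by omega)
      · exact vanish_aux 0 p P h0 m (by omega)
    · exact hh.coeff_eq_zero hd

noncomputable def Tsub : MvPolynomial (Fin 2) ℝ →ₐ[ℝ] MvPolynomial (Fin 2) ℝ :=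
  aeval ![X 0, X 1 - X 0]

noncomputable def Ssub : MvPolynomial (Fin 2) ℝ →ₐ[ℝ] MvPolynomial (Fin 2) ℝ :=
  aeval ![X 0, X 1 + X 0]

lemma Ssub_Tsub (P : MvPolynomial (Fin 2) ℝ) : Ssub (Tsub P) = P := by
  have : Ssub.comp Tsub = AlgHom.id ℝ (MvPolynomial (Fin 2) ℝ) := by
    apply MvPolynomial.algHom_ext
    intro i; fin_cases i <;> simp [Ssub, Tsub]
  exact congrFun (congrArg DFunLike.coe this) P

lemma Tsub_pderiv1 (P : MvPolynomial (Fin 2) ℝ) :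
    pderiv 1 (Tsub P) = Tsub (pderiv 1 P) := by
  induction P using MvPolynomial.induction_on with
  | C a => simp [Tsub]
  | add f g hf hg => simp [map_add, hf, hg]
  | mul_X f i hf =>
    rw [map_mul, pderiv_mul, hf, pderiv_mul, map_add, map_mul, map_mul]
    fin_cases i <;>
      simp [Tsub, pderiv_X_self, pderiv_X_of_ne (show (0:Fin 2) ≠ 1 by decide),
        pderiv_X_of_ne (show (1:Fin 2) ≠ 0 by decide)]

lemma Tsub_pderiv0 (P : MvPolynomial (Fin 2) ℝ) :
    pderiv 0 (Tsub P) = Tsub (pderiv 0 P - pderiv 1 P) := by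
  induction P using MvPolynomial.induction_on with
  | C a => simp [Tsub]
  | add f g hf hg =>
    simp only [map_add]
    rw [hf, hg, ← map_add]
    congr 1; ring
  | mul_X f i hf =>
    rw [map_mul, pderiv_mul, hf]
    fin_cases i <;>
    · rw [pderiv_mul, pderiv_mul]
      simp only [map_sub, map_add, map_mul, Tsub,
        pderiv_X_self, pderiv_X_of_ne (show (0:Fin 2) ≠ 1 by decide),
        pderiv_X_of_ne (show (1:Fin 2) ≠ 0 by decide)]
      simp [aeval_X]
      ring

lemma Tsub_iter1 (n : ℕ) (P : MvPolynomial (Fin 2) ℝ) :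
    (fun χ : MvPolynomial (Fin 2) ℝ => pderiv 1 χ)^[n] (Tsub P) =
      Tsub ((fun χ : MvPolynomial (Fin 2) ℝ => pderiv 1 χ)^[n] P) := by
  induction n generalizing P with
  | zero => simp
  | succ n ih =>
    rw [Function.iterate_succ_apply, Function.iterate_succ_apply, Tsub_pderiv1]
    exact ih _

lemma Tsub_iter0 (n : ℕ) (P : MvPolynomial (Fin 2) ℝ) :
    (fun χ : MvPolynomial (Fin 2) ℝ => pderiv 0 χ)^[n] (Tsub P) =
      Tsub ((fun χ : MvPolynomial (Fin 2) ℝ => pderiv 0 χ - pderiv 1 χ)^[n] P) := by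
  induction n generalizing P with
  | zero => simp
  | succ n ih =>
    rw [Function.iterate_succ_apply, Function.iterate_succ_apply, Tsub_pderiv0]
    exact ih _

lemma Tsub_homog {n : ℕ} {P : MvPolynomial (Fin 2) ℝ} (h : P.IsHomogeneous n) :
    (Tsub P).IsHomogeneous n := by
  have hg : ∀ i : Fin 2, (![X 0, X 1 - X 0] i : MvPolynomial (Fin 2) ℝ).IsHomogeneous 1 := by
    intro i; fin_cases i
    · exact isHomogeneous_X _ _
    · exact (isHomogeneous_X _ _).sub (isHomogeneous_X _ _)
  have := h.aeval _ hg
  simpa [Tsub] using this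

/-- Two-operator instance of the uniqueness argument in Theorem 3.4(3): homogeneous
polynomials `φ(a₁,a₂)` of degree `p + q - 2` satisfying `∂₂^q φ = 0` and
`(∂₁ - ∂₂)^p φ = 0` form a space of dimension at most `1`. -/
theorem two_operator_uniqueness (p q : ℕ) (hp : 0 < p) (hq : 0 < q)
    (φ ψ : MvPolynomial (Fin 2) ℝ)
    (hφ : φ.IsHomogeneous (p + q - 2)) (hψ : ψ.IsHomogeneous (p + q - 2))
    (hφ1 : (fun χ : MvPolynomial (Fin 2) ℝ => pderiv 1 χ)^[q] φ = 0)
    (hφ2 : (fun χ : MvPolynomial (Fin 2) ℝ => pderiv 0 χ - pderiv 1 χ)^[p] φ = 0)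
    (hψ1 : (fun χ : MvPolynomial (Fin 2) ℝ => pderiv 1 χ)^[q] ψ = 0)
    (hψ2 : (fun χ : MvPolynomial (Fin 2) ℝ => pderiv 0 χ - pderiv 1 χ)^[p] ψ = 0) :
    ∃ c : ℝ, ψ = c • φ ∨ φ = c • ψ := by
  obtain ⟨a, ha⟩ := key_aux p q hp hq (Tsub φ) (Tsub_homog hφ)
    (by rw [Tsub_iter0, hφ2, map_zero]) (by rw [Tsub_iter1, hφ1, map_zero])
  obtain ⟨b, hb⟩ := key_aux p q hp hq (Tsub ψ) (Tsub_homog hψ)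
    (by rw [Tsub_iter0, hψ2, map_zero]) (by rw [Tsub_iter1, hψ1, map_zero])
  by_cases haz : a = 0
  · refine ⟨0, Or.inr ?_⟩
    have : Tsub φ = 0 := by rw [ha, haz, zero_smul]
    have hφ0 : φ = 0 := by
      have := congrArg Ssub this
      rwa [Ssub_Tsub, map_zero] at this
    simp [hφ0]
  · refine ⟨b / a, Or.inl ?_⟩
    have : Tsub ψ = Tsub ((b / a) • φ) := by
      rw [map_smul, ha, hb, smul_smul]
      congr 1; field_simp
    have := congrArg Ssub this
    rwa [Ssub_Tsub, Ssub_Tsub] at this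
end
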